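/- There exist infinitely many pairs of integers (p, q) with 32·p^2 - 1420·q^2 = 20. -/
import Mathlib

private def pellSeq : ℕ → ℤ × ℤ
  | 0 => (1, 0)
  | n + 1 => (1279 * (pellSeq n).1 + 68160 * (pellSeq n).2,
              24 * (pellSeq n).1 + 1279 * (pellSeq n).2)

private lemma pellSeq_prop (n : ℕ) :
    (pellSeq n).1 ^ 2 - 2840 * (pellSeq n).2 ^ 2 = 1 ∧ 1 ≤ (pellSeq n).1 ∧ 0 ≤ (pellSeq n).2 := by
  induction n with
  | zero => simp [pellSeq]
  | succ n ih =>
    obtain ⟨h1, h2, h3⟩ := ih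
    refine ⟨?_, ?_, ?_⟩
    · show (1279 * (pellSeq n).1 + 68160 * (pellSeq n).2) ^ 2 -
        2840 * (24 * (pellSeq n).1 + 1279 * (pellSeq n).2) ^ 2 = 1
      nlinarith [h1]
    · show 1 ≤ 1279 * (pellSeq n).1 + 68160 * (pellSeq n).2
      nlinarith
    · show 0 ≤ 24 * (pellSeq n).1 + 1279 * (pellSeq n).2
      nlinarith

private lemma pellSeq_mono (n : ℕ) : (pellSeq n).1 < (pellSeq (n + 1)).1 := by
  obtain ⟨h1, h2, h3⟩ := pellSeq_prop n
  show (pellSeq n).1 < 1279 * (pellSeq n).1 + 68160 * (pellSeq n).2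
  nlinarith

theorem infinitely_many_obstruction_solutions :
    {x : ℤ × ℤ | 32 * x.1 ^ 2 - 1420 * x.2 ^ 2 = 20}.Infinite := by
  apply Set.infinite_of_injective_forall_mem
    (f := fun n : ℕ => (20 * (pellSeq n).1 + 1065 * (pellSeq n).2,
                        3 * (pellSeq n).1 + 160 * (pellSeq n).2))
  · have hmono : StrictMono (fun n => (pellSeq n).1) :=
      strictMono_nat_of_lt_succ pellSeq_mono
    intro a b hab
    by_contra hne
    rcases lt_or_gt_of_ne hne with h | h
    all_goals {
      have h1 : (pellSeq a).1 < (pellSeq b).1 ∨ (pellSeq b).1 < (pellSeq a).1 :=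
        by first | exact Or.inl (hmono h) | exact Or.inr (hmono h)
      have h2 := (pellSeq_prop a).2.2
      have h3 := (pellSeq_prop b).2.2
      simp only [Prod.mk.injEq] at hab
      obtain ⟨ha, hb⟩ := hab
      omega
    }
  · intro n
    obtain ⟨h1, -, -⟩ := pellSeq_prop n
    simp only [Set.mem_setOf_eq]
    nlinarith [h1]
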